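/- arXiv:2407.15163 — 4 statements merged into one kernel-verified Lean document; each statement's English description precedes it below -/
import Mathlib

section
/- For j = 1, 2 let αj, βj, γj, δj, μj be real numbers and define Hj(x,y) = −(1/2)·αj·x² − (1/2)·δj·y² − βj·x·y − γj·x + μj·y. Assume δ1·δ2 ≠ 0, Λ := δ2·(β1 − μ1) − δ1·(β2 − μ2) ≠ 0, and δ2²·(β1 + μ1)² ≠ Λ². Then there are at most two quadruples (y1, y2, y3, y4) of real numbers satisfying y2 = −y1, y3 ≠ y4, H1(−1, y2) = H1(1, y3), H1(−1, y1) = H1(1, y4), and H2(1, y3) = H2(1, y4). -/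
/-- With the two linear saddle Hamiltonians `H1, H2`,
`δ1 δ2 ≠ 0`, `Λ := δ2(β1 − μ1) − δ1(β2 − μ2) ≠ 0` and
`δ2²(β1 + μ1)² ≠ Λ²`, there are at most two quadruples `(y1,y2,y3,y4)`
satisfying the crossing conditions. -/
theorem stmt_9 (α1 β1 γ1 δ1 μ1 α2 β2 γ2 δ2 μ2 : ℝ)
    (H1 H2 : ℝ → ℝ → ℝ)
    (hH1 : ∀ x y, H1 x y =
      -(1/2) * α1 * x ^ 2 - (1/2) * δ1 * y ^ 2 - β1 * x * y - γ1 * x + μ1 * y)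
    (hH2 : ∀ x y, H2 x y =
      -(1/2) * α2 * x ^ 2 - (1/2) * δ2 * y ^ 2 - β2 * x * y - γ2 * x + μ2 * y)
    (hδ : δ1 * δ2 ≠ 0)
    (hΛ : δ2 * (β1 - μ1) - δ1 * (β2 - μ2) ≠ 0)
    (hne : δ2 ^ 2 * (β1 + μ1) ^ 2 ≠ (δ2 * (β1 - μ1) - δ1 * (β2 - μ2)) ^ 2) :
    ∃ p q : ℝ × ℝ × ℝ × ℝ,
      {t : ℝ × ℝ × ℝ × ℝ |
        t.2.1 = -t.1 ∧ t.2.2.1 ≠ t.2.2.2 ∧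
        H1 (-1) t.2.1 = H1 1 t.2.2.1 ∧
        H1 (-1) t.1 = H1 1 t.2.2.2 ∧
        H2 1 t.2.2.1 = H2 1 t.2.2.2} ⊆ {p, q} := by
  have hδ1 : δ1 ≠ 0 := fun h => hδ (by rw [h]; ring)
  have hδ2 : δ2 ≠ 0 := fun h => hδ (by rw [h]; ring)
  set Λ : ℝ := δ2 * (β1 - μ1) - δ1 * (β2 - μ2) with hΛdef
  set A : ℝ := δ1 * δ2 ^ 2 * (Λ ^ 2 - (β1 + μ1) ^ 2 * δ2 ^ 2) with hA
  set B : ℝ := Λ ^ 2 * (δ1 * (μ2 - β2) ^ 2 + 2 * (β1 - μ1) * (μ2 - β2) * δ2 +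
    4 * γ1 * δ2 ^ 2) with hB
  have hAne : A ≠ 0 := by
    have h1 : Λ ^ 2 - (β1 + μ1) ^ 2 * δ2 ^ 2 ≠ 0 := by
      intro h; apply hne; nlinarith [h]
    exact mul_ne_zero (mul_ne_zero hδ1 (pow_ne_zero 2 hδ2)) h1
  set K : ℝ := B / A with hK
  set F : ℝ → ℝ × ℝ × ℝ × ℝ := fun a =>
    (a, -a, ((2 * (μ2 - β2) / δ2) + 2 * a * (β1 + μ1) * δ2 / Λ) / 2,
            ((2 * (μ2 - β2) / δ2) - 2 * a * (β1 + μ1) * δ2 / Λ) / 2) with hF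
  refine ⟨F (Real.sqrt K), F (-Real.sqrt K), ?_⟩
  rintro ⟨a, y2, u, v⟩ ⟨h2, huv, e1, e2, e3⟩
  simp only at h2 huv e1 e2 e3
  rw [hH1, hH1] at e1 e2
  rw [hH2, hH2] at e3
  subst h2
  have hs : δ2 * (u + v) = 2 * (μ2 - β2) := by
    have h0 : (u - v) * (δ2 * (u + v) - 2 * (μ2 - β2)) = 0 := by
      linear_combination (-2 : ℝ) * e3
    rcases mul_eq_zero.mp h0 with h | h
    · exact absurd (sub_eq_zero.mp h) huv
    · linarith [sub_eq_zero.mp h]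
  have hd : Λ * (u - v) = 2 * a * (β1 + μ1) * δ2 := by
    linear_combination δ2 * e1 - δ2 * e2 - (1/2) * δ1 * (u - v) * hs
  have hsum : -δ1 * a ^ 2 + (1/2) * δ1 * (u ^ 2 + v ^ 2) + (β1 - μ1) * (u + v)
      + 4 * γ1 = 0 := by
    linear_combination e1 + e2
  have hKa : A * a ^ 2 = B := by
    rw [hA, hB]
    linear_combination (-(δ2 ^ 2) * Λ ^ 2) * hsum
      + (δ1 * δ2 ^ 2 / 4) * (Λ * (u - v) + 2 * a * (β1 + μ1) * δ2) * hd
      + (δ1 * Λ ^ 2 / 4) * (δ2 * (u + v) + 2 * (μ2 - β2)) * hs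
      + (Λ ^ 2 * (β1 - μ1) * δ2) * hs
  have ha2 : a ^ 2 = K := by
    rw [hK, eq_div_iff hAne]; linear_combination hKa
  have habs : Real.sqrt K = |a| := by
    rw [← ha2, Real.sqrt_sq_eq_abs]
  have hu : u = ((2 * (μ2 - β2) / δ2) + 2 * a * (β1 + μ1) * δ2 / Λ) / 2 := by
    have h1 : u + v = 2 * (μ2 - β2) / δ2 := by
      rw [eq_div_iff hδ2]; linarith [hs]
    have h2 : u - v = 2 * a * (β1 + μ1) * δ2 / Λ := by
      rw [eq_div_iff hΛ]; linarith [hd]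
    rw [← h1, ← h2]; ring
  have hv : v = ((2 * (μ2 - β2) / δ2) - 2 * a * (β1 + μ1) * δ2 / Λ) / 2 := by
    have h1 : u + v = 2 * (μ2 - β2) / δ2 := by
      rw [eq_div_iff hδ2]; linarith [hs]
    have h2 : u - v = 2 * a * (β1 + μ1) * δ2 / Λ := by
      rw [eq_div_iff hΛ]; linarith [hd]
    rw [← h1, ← h2]; ring
  have hqa : (a, -a, u, v) = F a := by
    simp only [hF, Prod.mk.injEq]
    exact ⟨trivial, trivial, hu, hv⟩
  simp only [Set.mem_insert_iff, Set.mem_singleton_iff]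
  rcases abs_cases a with ⟨h, _⟩ | ⟨h, _⟩
  · left; rw [hqa, habs, h]
  · right; rw [hqa, habs, h, neg_neg]
end

section
/- Define I1(x,y) = ln(x² + y² − 1) − (1/2)·ln(x⁴ + y⁴) − arctan(x²/y²). Then for every (x,y) ∈ ℝ² with x² + y² > 1 and y ≠ 0, the function I1 is differentiable at (x,y) and (∂I1/∂x)(x,y)·(y(x² − y²) − 2x⁴y) + (∂I1/∂y)(x,y)·(x(x² + y²) − 2x³y²) = 0; that is, I1 is a first integral of the planar system (ẋ, ẏ) = (y(x² − y²) − 2x⁴y, x(x² + y²) − 2x³y²). -/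
/-- The first integral `I1(x,y) = ln(x² + y² − 1) − (1/2)ln(x⁴ + y⁴) − arctan(x²/y²)`. -/
noncomputable def I1fun : ℝ × ℝ → ℝ := fun p =>
  Real.log (p.1 ^ 2 + p.2 ^ 2 - 1) - (1/2) * Real.log (p.1 ^ 4 + p.2 ^ 4) -
    Real.arctan (p.1 ^ 2 / p.2 ^ 2)

/-!
Differentiating along the vector field `V = centerField`, the quantities `x² + y² − 1`,
`x⁴ + y⁴` and `x²/y²` satisfy `V(x² + y² − 1) = −4x³y (x² + y² − 1)`,
`V(x⁴ + y⁴) = 4xy (1 − 2x²)(x⁴ + y⁴)` and `V(x²/y²) = −2xy (1 + (x²/y²)²)`. Hence the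
logarithmic derivatives of the first two and the derivative of `arctan(x²/y²)` are the
polynomials `−4x³y`, `4xy − 8x³y` and `−2xy`, and `−4x³y − (2xy − 4x³y) + 2xy = 0`.
-/

open ContinuousLinearMap

section DirDeriv

variable {E : Type*} [NormedAddCommGroup E] [NormedSpace ℝ E]

/-- Unlike `HasLineDerivAt`, this asks for Fréchet differentiability at `p`. -/
def HasDirDerivAt (f : E → ℝ) (v : E) (a : ℝ) (p : E) : Prop :=
  ∃ L : E →L[ℝ] ℝ, HasFDerivAt f L p ∧ L v = a

variable {f g : E → ℝ} {v p : E} {a b : ℝ}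

theorem HasFDerivAt.hasDirDerivAt {L : E →L[ℝ] ℝ} (h : HasFDerivAt f L p) (v : E) :
    HasDirDerivAt f v (L v) p :=
  ⟨L, h, rfl⟩

namespace HasDirDerivAt

theorem differentiableAt (h : HasDirDerivAt f v a p) : DifferentiableAt ℝ f p :=
  let ⟨_, hL, _⟩ := h
  hL.differentiableAt

theorem fderiv_apply (h : HasDirDerivAt f v a p) : fderiv ℝ f p v = a := by
  obtain ⟨L, hL, rfl⟩ := h
  rw [hL.fderiv]

theorem add (hf : HasDirDerivAt f v a p) (hg : HasDirDerivAt g v b p) :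
    HasDirDerivAt (fun q => f q + g q) v (a + b) p := by
  obtain ⟨L, hL, rfl⟩ := hf
  obtain ⟨M, hM, rfl⟩ := hg
  exact (hL.add hM).hasDirDerivAt v

theorem sub (hf : HasDirDerivAt f v a p) (hg : HasDirDerivAt g v b p) :
    HasDirDerivAt (fun q => f q - g q) v (a - b) p := by
  obtain ⟨L, hL, rfl⟩ := hf
  obtain ⟨M, hM, rfl⟩ := hg
  exact (hL.sub hM).hasDirDerivAt v

theorem sub_const (hf : HasDirDerivAt f v a p) (c : ℝ) :
    HasDirDerivAt (fun q => f q - c) v a p := by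
  obtain ⟨L, hL, rfl⟩ := hf
  exact (hL.sub_const c).hasDirDerivAt v

theorem const_mul (hf : HasDirDerivAt f v a p) (c : ℝ) :
    HasDirDerivAt (fun q => c * f q) v (c * a) p := by
  obtain ⟨L, hL, rfl⟩ := hf
  exact (hL.const_mul c).hasDirDerivAt v

theorem div (hf : HasDirDerivAt f v a p) (hg : HasDirDerivAt g v b p) (hp : g p ≠ 0) :
    HasDirDerivAt (fun q => f q / g q) v ((a * g p - f p * b) / g p ^ 2) p := by
  obtain ⟨L, hL, rfl⟩ := hf
  obtain ⟨M, hM, rfl⟩ := hg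
  have hinv : HasFDerivAt (fun q => (g q)⁻¹) (-(g p ^ 2)⁻¹ • M) p :=
    (hasDerivAt_inv hp).comp_hasFDerivAt p hM
  convert (hL.mul hinv).hasDirDerivAt v using 1
  · exact funext fun q => div_eq_mul_inv _ _
  · simp only [add_apply, smul_apply, smul_eq_mul]
    field_simp
    ring

theorem log (hf : HasDirDerivAt f v a p) (hp : f p ≠ 0) :
    HasDirDerivAt (fun q => Real.log (f q)) v (a / f p) p := by
  obtain ⟨L, hL, rfl⟩ := hf
  simpa [div_eq_inv_mul] using (hL.log hp).hasDirDerivAt v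

theorem arctan (hf : HasDirDerivAt f v a p) :
    HasDirDerivAt (fun q => Real.arctan (f q)) v (a / (1 + f p ^ 2)) p := by
  obtain ⟨L, hL, rfl⟩ := hf
  simpa [div_eq_inv_mul] using (hL.arctan).hasDirDerivAt v

end HasDirDerivAt

end DirDeriv

theorem hasDirDerivAt_fst_pow (n : ℕ) (v p : ℝ × ℝ) :
    HasDirDerivAt (fun q : ℝ × ℝ => q.1 ^ n) v (n * p.1 ^ (n - 1) * v.1) p := by
  simpa [mul_assoc] using (hasFDerivAt_fst.pow n).hasDirDerivAt v

theorem hasDirDerivAt_snd_pow (n : ℕ) (v p : ℝ × ℝ) :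
    HasDirDerivAt (fun q : ℝ × ℝ => q.2 ^ n) v (n * p.2 ^ (n - 1) * v.2) p := by
  simpa [mul_assoc] using (hasFDerivAt_snd.pow n).hasDirDerivAt v

def centerField (p : ℝ × ℝ) : ℝ × ℝ :=
  (p.2 * (p.1 ^ 2 - p.2 ^ 2) - 2 * p.1 ^ 4 * p.2, p.1 * (p.1 ^ 2 + p.2 ^ 2) - 2 * p.1 ^ 3 * p.2 ^ 2)

theorem hasDirDerivAt_sq_add_sq_sub_one (x y : ℝ) :
    HasDirDerivAt (fun q : ℝ × ℝ => q.1 ^ 2 + q.2 ^ 2 - 1) (centerField (x, y))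
      (-4 * x ^ 3 * y * (x ^ 2 + y ^ 2 - 1)) (x, y) := by
  convert ((hasDirDerivAt_fst_pow 2 _ _).add (hasDirDerivAt_snd_pow 2 _ _)).sub_const 1 using 1
  simp only [centerField]
  push_cast
  ring

theorem hasDirDerivAt_pow_four_add_pow_four (x y : ℝ) :
    HasDirDerivAt (fun q : ℝ × ℝ => q.1 ^ 4 + q.2 ^ 4) (centerField (x, y))
      (4 * x * y * (1 - 2 * x ^ 2) * (x ^ 4 + y ^ 4)) (x, y) := by
  convert (hasDirDerivAt_fst_pow 4 _ _).add (hasDirDerivAt_snd_pow 4 _ _) using 1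
  simp only [centerField]
  push_cast
  ring

theorem hasDirDerivAt_sq_div_sq {x y : ℝ} (hy : y ≠ 0) :
    HasDirDerivAt (fun q : ℝ × ℝ => q.1 ^ 2 / q.2 ^ 2) (centerField (x, y))
      (-2 * x * y * (1 + (x ^ 2 / y ^ 2) ^ 2)) (x, y) := by
  convert (hasDirDerivAt_fst_pow 2 _ _).div (hasDirDerivAt_snd_pow 2 _ (x, y)) (pow_ne_zero 2 hy)
    using 1
  simp only [centerField]
  push_cast
  field_simp
  ring

/-- For `x² + y² > 1`, `y ≠ 0`, `I1` is differentiable at `(x,y)`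
and its derivative annihilates the vector field
`(y(x² − y²) − 2x⁴y, x(x² + y²) − 2x³y²)`, i.e. `I1` is a first integral. -/
theorem stmt_12 (x y : ℝ) (h : 1 < x ^ 2 + y ^ 2) (hy : y ≠ 0) :
    DifferentiableAt ℝ I1fun (x, y) ∧
    fderiv ℝ I1fun (x, y)
      (y * (x ^ 2 - y ^ 2) - 2 * x ^ 4 * y,
       x * (x ^ 2 + y ^ 2) - 2 * x ^ 3 * y ^ 2) = 0 := by
  have hr : x ^ 2 + y ^ 2 - 1 ≠ 0 := by linarith
  have hq : x ^ 4 + y ^ 4 ≠ 0 := by positivity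
  have hI : HasDirDerivAt I1fun (centerField (x, y)) 0 (x, y) := by
    unfold I1fun
    convert (((hasDirDerivAt_sq_add_sq_sub_one x y).log hr).sub
      (((hasDirDerivAt_pow_four_add_pow_four x y).log hq).const_mul (1 / 2))).sub
      (hasDirDerivAt_sq_div_sq hy).arctan using 1
    field_simp
    ring
  exact ⟨hI.differentiableAt, hI.fderiv_apply⟩
end

section
/- The function u ↦ ln(u) − (1/2)·ln(u² + 1) − arctan(1/u) is strictly increasing on (0, ∞). Consequently, if y1 and y2 are nonzero real numbers with ln(y1²) − (1/2)·ln(y1⁴ + 1) − arctan(1/y1²) = ln(y2²) − (1/2)·ln(y2⁴ + 1) − arctan(1/y2²), then y1² = y2². -/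
open Real Set

lemma hasDerivAt_log_sub_half_log_sq_add_one_sub_arctan_inv {u : ℝ} (hu : u ≠ 0) :
    HasDerivAt (fun u : ℝ => log u - (1/2) * log (u ^ 2 + 1) - arctan (1 / u))
      ((u + 1) / (u * (u ^ 2 + 1))) u := by
  have hlog : HasDerivAt log u⁻¹ u := hasDerivAt_log hu
  have hlog_sq : HasDerivAt (fun u : ℝ => log (u ^ 2 + 1)) (2 * u / (u ^ 2 + 1)) u := by
    simpa using ((hasDerivAt_pow 2 u).add_const 1).log (by positivity)
  have harctan : HasDerivAt (fun u : ℝ => arctan (1 / u))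
      (1 / (1 + (1 / u) ^ 2) * -(u ^ 2)⁻¹) u := by
    simpa only [one_div] using (hasDerivAt_inv hu).arctan
  refine ((hlog.sub (hlog_sq.const_mul (1/2))).sub harctan).congr_deriv ?_
  -- `(arctan (1/u))' = -1/(u² + 1)`, so the derivative is `1/u - u/(u² + 1) + 1/(u² + 1)`.
  field_simp
  ring

lemma strictMonoOn_log_sub_half_log_sq_add_one_sub_arctan_inv :
    StrictMonoOn (fun u : ℝ => log u - (1/2) * log (u ^ 2 + 1) - arctan (1 / u)) (Ioi 0) := by
  have hderiv (u : ℝ) (hu : u ∈ Ioi 0) :=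
    hasDerivAt_log_sub_half_log_sq_add_one_sub_arctan_inv (ne_of_gt hu)
  refine strictMonoOn_of_hasDerivWithinAt_pos (f' := fun u => (u + 1) / (u * (u ^ 2 + 1)))
    (convex_Ioi 0) (fun u hu => (hderiv u hu).continuousAt.continuousWithinAt) ?_ ?_ <;> rw [interior_Ioi]
  · exact fun u hu => (hderiv u hu).hasDerivWithinAt
  · intro u (hu : 0 < u)
    positivity

/-- `u ↦ ln u − (1/2)ln(u² + 1) − arctan(1/u)` is strictly
increasing on `(0,∞)`; consequently if `y1, y2 ≠ 0` give equal values at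
`u = y1², y2²`, then `y1² = y2²`. -/
theorem stmt_14 :
    StrictMonoOn
      (fun u : ℝ => Real.log u - (1/2) * Real.log (u ^ 2 + 1) -
        Real.arctan (1 / u)) (Set.Ioi (0 : ℝ)) ∧
    ∀ y1 y2 : ℝ, y1 ≠ 0 → y2 ≠ 0 →
      Real.log (y1 ^ 2) - (1/2) * Real.log (y1 ^ 4 + 1) -
        Real.arctan (1 / y1 ^ 2) =
      Real.log (y2 ^ 2) - (1/2) * Real.log (y2 ^ 4 + 1) -
        Real.arctan (1 / y2 ^ 2) →
      y1 ^ 2 = y2 ^ 2 := by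
  refine ⟨strictMonoOn_log_sub_half_log_sq_add_one_sub_arctan_inv, fun y1 y2 hy1 hy2 heq => ?_⟩
  refine strictMonoOn_log_sub_half_log_sq_add_one_sub_arctan_inv.injOn
    (mem_Ioi.2 (by positivity)) (mem_Ioi.2 (by positivity)) ?_
  simpa only [← pow_mul] using heq
end

section
/- Let α, β, γ, δ, μ be real numbers with δ ≠ 0 and Δ := α·δ − β² < 0. Set x0 = −(β·μ + δ·γ)/Δ, y0 = (α·μ + β·γ)/Δ, A = y0 + ((β + √(−Δ))/δ)·x0, and B = y0 + ((β − √(−Δ))/δ)·x0, and define H(x,y) = −(1/2)·α·x² − (1/2)·δ·y² − β·x·y − γ·x + μ·y. Then H(0, A) = H(x0, y0) and H(0, B) = H(x0, y0). -/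
lemma stmt_17_key (α β γ δ μ s x0 y0 A : ℝ)
    (hs : s ^ 2 = β ^ 2 - α * δ)
    (hu : δ * A = δ * y0 + (β + s) * x0)
    (hx : (α * δ - β ^ 2) * x0 = -(β * μ + δ * γ))
    (hm : δ * y0 + β * x0 = μ)
    (hδ : δ ≠ 0) :
    -(1/2) * α * (0:ℝ) ^ 2 - (1/2) * δ * A ^ 2 - β * 0 * A - γ * 0 + μ * A
    = -(1/2) * α * x0 ^ 2 - (1/2) * δ * y0 ^ 2 - β * x0 * y0 - γ * x0 + μ * y0 := by
  have h2 : (2 * δ ^ 2 : ℝ) ≠ 0 := by positivity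
  refine mul_left_cancel₀ h2 ?_
  linear_combination (-(δ^2*A) - δ*(δ*y0+(β+s)*x0) + 2*δ*μ) * hu
    + (-(δ*x0^2)) * hs + (2*δ*x0) * hx + (-(2*δ*s*x0)) * hm

/-- With `δ ≠ 0`, `Δ := αδ − β² < 0`,
`x0 = −(βμ + δγ)/Δ`, `y0 = (αμ + βγ)/Δ`,
`A = y0 + ((β + √(−Δ))/δ)·x0`, `B = y0 + ((β − √(−Δ))/δ)·x0`, and
`H(x,y) = −αx²/2 − δy²/2 − βxy − γx + μy`, one has
`H(0,A) = H(x0,y0)` and `H(0,B) = H(x0,y0)`. -/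
theorem stmt_17 (α β γ δ μ : ℝ) (hδ : δ ≠ 0) (hΔ : α * δ - β ^ 2 < 0)
    (H : ℝ → ℝ → ℝ)
    (hH : ∀ x y, H x y =
      -(1/2) * α * x ^ 2 - (1/2) * δ * y ^ 2 - β * x * y - γ * x + μ * y)
    (x0 y0 A B : ℝ)
    (hx0 : x0 = -(β * μ + δ * γ) / (α * δ - β ^ 2))
    (hy0 : y0 = (α * μ + β * γ) / (α * δ - β ^ 2))
    (hA : A = y0 + (β + Real.sqrt (-(α * δ - β ^ 2))) / δ * x0)
    (hB : B = y0 + (β - Real.sqrt (-(α * δ - β ^ 2))) / δ * x0) :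
    H 0 A = H x0 y0 ∧ H 0 B = H x0 y0 := by
  have hD : (α * δ - β ^ 2) ≠ 0 := ne_of_lt hΔ
  set s := Real.sqrt (-(α * δ - β ^ 2)) with hsdef
  have hs : s ^ 2 = β ^ 2 - α * δ := by
    rw [hsdef, Real.sq_sqrt (by linarith)]; ring
  have hs' : (-s) ^ 2 = β ^ 2 - α * δ := by rw [neg_pow]; simpa using hs
  have hx : (α * δ - β ^ 2) * x0 = -(β * μ + δ * γ) := by
    rw [hx0]; field_simp
  have hy : (α * δ - β ^ 2) * y0 = α * μ + β * γ := by
    rw [hy0]; field_simp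
  have hm : δ * y0 + β * x0 = μ := by
    refine mul_left_cancel₀ hD ?_
    linear_combination δ * hy + β * hx
  have huA : δ * A = δ * y0 + (β + s) * x0 := by
    rw [hA]; field_simp
  have huB : δ * B = δ * y0 + (β + (-s)) * x0 := by
    rw [hB]; field_simp; ring
  constructor <;> rw [hH, hH]
  · exact stmt_17_key α β γ δ μ s x0 y0 A hs huA hx hm hδ
  · exact stmt_17_key α β γ δ μ (-s) x0 y0 B hs' huB hx hm hδ
end
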